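/- arXiv:1810.10690 — 3 statements merged into one kernel-verified Lean document; each statement's English description precedes it below -/
import Mathlib

section
/- Let f : ℝ^d → ℝ be differentiable with L-Lipschitz gradient and bounded below by f*. Fix η > 0 and a sequence v_0, …, v_{K-1} in ℝ^d, and define x_{k+1} = x_k - η v_k. If at every step ‖∇f(x_k) - v_k‖² ≤ δ_k, then ∑_{k=0}^{K-1} (η/2 - Lη²/2)‖v_k‖² ≤ f(x_0) - f* + (η/2)∑_{k=0}^{K-1} δ_k. -/
open scoped RealInnerProductSpace

lemma descent_lemma_aux {d : ℕ} (f : EuclideanSpace ℝ (Fin d) → ℝ) (L : ℝ)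
    (hL : 0 ≤ L) (hdiff : Differentiable ℝ f)
    (hlip : ∀ x y, ‖gradient f x - gradient f y‖ ≤ L * ‖x - y‖)
    (x v : EuclideanSpace ℝ (Fin d)) :
    f (x + v) ≤ f x + ⟪gradient f x, v⟫ + L / 2 * ‖v‖ ^ 2 := by
  have hgradcont : Continuous (gradient f) := by
    have : LipschitzWith L.toNNReal (gradient f) := by
      apply LipschitzWith.of_dist_le_mul
      intro a b
      rw [dist_eq_norm, dist_eq_norm]
      calc ‖gradient f a - gradient f b‖ ≤ L * ‖a - b‖ := hlip a b
        _ = (L.toNNReal : ℝ) * ‖a - b‖ := by rw [Real.coe_toNNReal _ hL]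
    exact this.continuous
  have hg : ∀ t : ℝ, HasDerivAt (fun t : ℝ => f (x + t • v))
      (⟪gradient f (x + t • v), v⟫) t := by
    intro t
    have h1 : HasDerivAt (fun t : ℝ => x + t • v) v t := by
      simpa using ((hasDerivAt_id t).smul_const v).const_add x
    have h2 := ((hdiff (x + t • v)).hasGradientAt.hasFDerivAt).comp_hasDerivAt t h1
    simpa [InnerProductSpace.toDual_apply_apply, Function.comp_def] using h2
  have hcont : Continuous (fun t : ℝ => ⟪gradient f (x + t • v), v⟫) := by
    apply Continuous.inner
    · exact hgradcont.comp (continuous_const.add (continuous_id.smul continuous_const))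
    · exact continuous_const
  have hint : f (x + v) - f x = ∫ t in (0:ℝ)..1, ⟪gradient f (x + t • v), v⟫ := by
    have := intervalIntegral.integral_eq_sub_of_hasDerivAt
      (f := fun t : ℝ => f (x + t • v)) (a := 0) (b := 1)
      (fun t _ => hg t) (hcont.intervalIntegrable 0 1)
    simp only [one_smul, zero_smul, add_zero] at this
    linarith [this]
  have hbound : ∀ t ∈ Set.Icc (0:ℝ) 1,
      ⟪gradient f (x + t • v), v⟫ ≤ ⟪gradient f x, v⟫ + L * t * ‖v‖ ^ 2 := by
    intro t ht
    have h1 : ⟪gradient f (x + t • v) - gradient f x, v⟫ ≤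
        ‖gradient f (x + t • v) - gradient f x‖ * ‖v‖ := real_inner_le_norm _ _
    have h2 : ‖gradient f (x + t • v) - gradient f x‖ ≤ L * (t * ‖v‖) := by
      have := hlip (x + t • v) x
      simpa [norm_smul, abs_of_nonneg ht.1, mul_assoc] using this
    have h3 : ⟪gradient f (x + t • v) - gradient f x, v⟫ ≤ L * t * ‖v‖ ^ 2 := by
      calc ⟪gradient f (x + t • v) - gradient f x, v⟫ ≤
          ‖gradient f (x + t • v) - gradient f x‖ * ‖v‖ := h1
        _ ≤ L * (t * ‖v‖) * ‖v‖ := by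
            apply mul_le_mul_of_nonneg_right h2 (norm_nonneg _)
        _ = L * t * ‖v‖ ^ 2 := by ring
    have h4 : ⟪gradient f (x + t • v), v⟫ =
        ⟪gradient f (x + t • v) - gradient f x, v⟫ + ⟪gradient f x, v⟫ := by
      rw [inner_sub_left]; ring
    linarith
  have hintle : ∫ t in (0:ℝ)..1, ⟪gradient f (x + t • v), v⟫ ≤
      ∫ t in (0:ℝ)..1, (⟪gradient f x, v⟫ + L * t * ‖v‖ ^ 2) := by
    apply intervalIntegral.integral_mono_on zero_le_one
      (hcont.intervalIntegrable 0 1)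
      ((continuous_const.add ((continuous_const.mul continuous_id).mul
        continuous_const)).intervalIntegrable 0 1)
    exact hbound
  have hrhs : ∫ t in (0:ℝ)..1, (⟪gradient f x, v⟫ + L * t * ‖v‖ ^ 2) =
      ⟪gradient f x, v⟫ + L / 2 * ‖v‖ ^ 2 := by
    rw [intervalIntegral.integral_add intervalIntegrable_const
      ((by fun_prop : Continuous fun t : ℝ => L * t * ‖v‖ ^ 2).intervalIntegrable 0 1)]
    have h5 : (fun t : ℝ => L * t * ‖v‖ ^ 2) = fun t : ℝ => t * (L * ‖v‖ ^ 2) := by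
      funext t; ring
    rw [h5, intervalIntegral.integral_mul_const, integral_id]
    simp; ring
  linarith [hint, hintle, hrhs.le]

theorem sum_grad_estimate_bound {d : ℕ} (f : EuclideanSpace ℝ (Fin d) → ℝ) (L : ℝ)
    (hL : 0 ≤ L) (hdiff : Differentiable ℝ f)
    (hlip : ∀ x y, ‖gradient f x - gradient f y‖ ≤ L * ‖x - y‖)
    (fstar : ℝ) (hlb : ∀ x, fstar ≤ f x)
    (η : ℝ) (hη : 0 < η) (K : ℕ)
    (x v : ℕ → EuclideanSpace ℝ (Fin d))
    (hupd : ∀ k, x (k + 1) = x k - η • v k)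
    (δ : ℕ → ℝ) (hδ : ∀ k, 0 ≤ δ k)
    (herr : ∀ k < K, ‖gradient f (x k) - v k‖ ^ 2 ≤ δ k) :
    ∑ k ∈ Finset.range K, (η / 2 - L * η ^ 2 / 2) * ‖v k‖ ^ 2 ≤
      f (x 0) - fstar + η / 2 * ∑ k ∈ Finset.range K, δ k := by
  have step : ∀ k < K, (η / 2 - L * η ^ 2 / 2) * ‖v k‖ ^ 2 ≤
      f (x k) - f (x (k + 1)) + η / 2 * δ k := by
    intro k hk
    have hd := descent_lemma_aux f L hL hdiff hlip (x k) (-(η • v k))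
    rw [← sub_eq_add_neg, ← hupd k] at hd
    have hinner : ⟪gradient f (x k), -(η • v k)⟫ =
        -η * (⟪gradient f (x k) - v k, v k⟫ + ‖v k‖ ^ 2) := by
      rw [inner_neg_right, real_inner_smul_right, inner_sub_left,
        real_inner_self_eq_norm_sq]
      ring
    have hcs : -⟪gradient f (x k) - v k, v k⟫ ≤
        (‖gradient f (x k) - v k‖ ^ 2 + ‖v k‖ ^ 2) / 2 := by
      have h1 : -⟪gradient f (x k) - v k, v k⟫ ≤ ‖gradient f (x k) - v k‖ * ‖v k‖ := by
        have := real_inner_le_norm (gradient f (x k) - v k) (-(v k))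
        simpa [inner_neg_right] using this
      nlinarith [sq_nonneg (‖gradient f (x k) - v k‖ - ‖v k‖)]
    have hδk := herr k hk
    have hnorm : ‖-(η • v k)‖ ^ 2 = η ^ 2 * ‖v k‖ ^ 2 := by
      rw [norm_neg, norm_smul, Real.norm_eq_abs, mul_pow, sq_abs]
    nlinarith [hd, hinner, hcs, hδk]
  calc ∑ k ∈ Finset.range K, (η / 2 - L * η ^ 2 / 2) * ‖v k‖ ^ 2
      ≤ ∑ k ∈ Finset.range K, (f (x k) - f (x (k + 1)) + η / 2 * δ k) :=
        Finset.sum_le_sum (fun k hk => step k (Finset.mem_range.mp hk))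
    _ = (f (x 0) - f (x K)) + η / 2 * ∑ k ∈ Finset.range K, δ k := by
        rw [Finset.sum_add_distrib, Finset.sum_range_sub' (fun k => f (x k)),
          Finset.mul_sum]
    _ ≤ f (x 0) - fstar + η / 2 * ∑ k ∈ Finset.range K, δ k := by
        have := hlb (x K); linarith
end

section
/- Let h : ℝ^d → ℝ be convex, η > 0. For x, g ∈ ℝ^d, let x⁺ = prox_{ηh}(x - ηg) and P(x,g,η) = (x - x⁺)/η. Then ⟨g, P(x,g,η)⟩ ≥ ‖P(x,g,η)‖² + (1/η)(h(x⁺) - h(x)). -/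
open scoped RealInnerProductSpace

theorem prox_gradient_mapping_inequality {d : ℕ} (h : EuclideanSpace ℝ (Fin d) → ℝ)
    (hconv : ConvexOn ℝ Set.univ h) (η : ℝ) (hη : 0 < η)
    (x g xplus : EuclideanSpace ℝ (Fin d))
    (hmin : ∀ u, h xplus + (1 / (2 * η)) * ‖xplus - (x - η • g)‖ ^ 2 ≤
      h u + (1 / (2 * η)) * ‖u - (x - η • g)‖ ^ 2)
    (P : EuclideanSpace ℝ (Fin d)) (hP : P = (1 / η) • (x - xplus)) :
    ⟪g, P⟫ ≥ ‖P‖ ^ 2 + (1 / η) * (h xplus - h x) := by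
  set y := x - η • g with hy
  set b := x - xplus with hb
  have key : ∀ t : ℝ, 0 < t → t ≤ 1 →
      ⟪y - xplus, b⟫ - t * ‖b‖ ^ 2 / 2 ≤ η * (h x - h xplus) := by
    intro t ht ht1
    have hcv := hconv.2 (Set.mem_univ xplus) (Set.mem_univ x)
      (by linarith : (0:ℝ) ≤ 1 - t) ht.le (by ring)
    simp only [smul_eq_mul] at hcv
    have hmin' := hmin ((1-t) • xplus + t • x)
    have hvec : ((1-t) • xplus + t • x) - y = (xplus - y) + t • b := by
      simp only [hb, hy]; module
    have hnorm : ‖((1-t) • xplus + t • x) - y‖ ^ 2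
        = ‖xplus - y‖ ^ 2 + 2 * t * ⟪xplus - y, b⟫ + t ^ 2 * ‖b‖ ^ 2 := by
      rw [hvec, norm_add_sq_real, real_inner_smul_right, norm_smul,
        Real.norm_eq_abs, abs_of_pos ht]
      ring
    have hI : ⟪y - xplus, b⟫ = -⟪xplus - y, b⟫ := by
      rw [← inner_neg_left]; congr 1; abel
    rw [hnorm] at hmin'
    have hstep : t * (h xplus - h x) ≤
        (1 / (2 * η)) * (2 * t * ⟪xplus - y, b⟫ + t ^ 2 * ‖b‖ ^ 2) := by
      linarith
    have h2η : (0:ℝ) < 2 * η := by linarith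
    have h3 := mul_le_mul_of_nonneg_left hstep h2η.le
    rw [show (2*η) * ((1/(2*η)) * (2 * t * ⟪xplus - y, b⟫ + t ^ 2 * ‖b‖ ^ 2))
        = 2 * t * ⟪xplus - y, b⟫ + t ^ 2 * ‖b‖ ^ 2 from by field_simp] at h3
    have h1 : t * (2 * η * (h xplus - h x)) ≤
        t * (2 * ⟪xplus - y, b⟫ + t * ‖b‖ ^ 2) := by nlinarith [h3]
    have h2 := (mul_le_mul_iff_right₀ ht).mp h1
    rw [hI]
    linarith
  -- pass to the limit t → 0⁺
  have hA : ⟪y - xplus, b⟫ ≤ η * (h x - h xplus) := by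
    by_contra hc
    push_neg at hc
    set ε := ⟪y - xplus, b⟫ - η * (h x - h xplus) with hε
    have hεpos : 0 < ε := sub_pos.mpr hc
    have hN : (0:ℝ) ≤ ‖b‖ ^ 2 := by positivity
    set t := min 1 (ε / (‖b‖ ^ 2 + 1)) with htdef
    have ht : 0 < t := lt_min one_pos (by positivity)
    have ht1 : t ≤ 1 := min_le_left _ _
    have ht2 : t ≤ ε / (‖b‖ ^ 2 + 1) := min_le_right _ _
    have hk := key t ht ht1
    have : t * ‖b‖ ^ 2 / 2 < ε := by
      have : t * (‖b‖ ^ 2 + 1) ≤ ε := by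
        rw [← le_div_iff₀ (by positivity)]; exact ht2
      nlinarith
    linarith
  -- unfold the inner product
  have hbP : b = η • P := by
    rw [hP, smul_smul]
    field_simp
    rw [one_smul]
  have hinner : ⟪y - xplus, b⟫ = η ^ 2 * ‖P‖ ^ 2 - η ^ 2 * ⟪g, P⟫ := by
    have hyx : y - xplus = b - η • g := by simp only [hy, hb]; abel
    rw [hyx, hbP]
    simp only [inner_sub_left, real_inner_smul_left, real_inner_smul_right,
      real_inner_self_eq_norm_sq]
    rw [norm_smul, Real.norm_eq_abs, abs_of_pos hη]
    ring
  rw [hinner] at hA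
  rw [ge_iff_le, ← sub_nonneg]
  have heq : ⟪g, P⟫ - (‖P‖ ^ 2 + 1 / η * (h xplus - h x))
      = (η * (h x - h xplus) - (η ^ 2 * ‖P‖ ^ 2 - η ^ 2 * ⟪g, P⟫)) / η ^ 2 := by
    field_simp
    ring
  rw [heq]
  exact div_nonneg (by linarith) (by positivity)
end

section
/- Let f be differentiable with L-Lipschitz gradient and h convex, with Ψ = f + h. Fix η > 0, x ∈ ℝ^d, v ∈ ℝ^d, and define g = (x - prox_{ηh}(x - ηv))/η and x' = x - ηg. Then Ψ(x') ≤ Ψ(x) + (η/2)‖∇f(x) - v‖² - (η - Lη²/2 - η/2)‖g‖². -/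
open InnerProductSpace

local notation "⟪" x ", " y "⟫" => @inner ℝ _ _ x y

lemma descent_lemma {F : Type*} [NormedAddCommGroup F] [InnerProductSpace ℝ F] [CompleteSpace F]
    (f : F → ℝ) (L : ℝ) (hL : 0 ≤ L) (hdiff : Differentiable ℝ f)
    (hlip : ∀ x y, ‖gradient f x - gradient f y‖ ≤ L * ‖x - y‖) (x y : F) :
    f y ≤ f x + ⟪gradient f x, y - x⟫ + L / 2 * ‖y - x‖ ^ 2 := by
  set c : ℝ → F := fun t => x + t • (y - x) with hc
  have hcd : ∀ t : ℝ, HasDerivAt c (y - x) t := by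
    intro t
    simpa [hc] using ((hasDerivAt_id t).smul_const (y - x)).const_add x
  set φ : ℝ → ℝ := fun t => f (c t) - f x - t * ⟪gradient f x, y - x⟫ with hφdef
  have hφ : ∀ t : ℝ, HasDerivAt φ (⟪gradient f (c t), y - x⟫ - ⟪gradient f x, y - x⟫) t := by
    intro t
    have h1 : HasDerivAt (fun t => f (c t)) (⟪gradient f (c t), y - x⟫) t := by
      have := ((hdiff (c t)).hasGradientAt).hasFDerivAt.comp_hasDerivAt t (hcd t)
      exact this.congr_deriv (by simp)
    have h2 : HasDerivAt (fun s : ℝ => s * ⟪gradient f x, y - x⟫) (⟪gradient f x, y - x⟫) t := by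
      simpa using (hasDerivAt_id t).mul_const (⟪gradient f x, y - x⟫ : ℝ)
    exact (h1.sub_const (f x)).sub h2
  set B : ℝ → ℝ := fun t => L / 2 * t ^ 2 * ‖y - x‖ ^ 2 with hB
  have hB' : ∀ t : ℝ, HasDerivAt B (L * t * ‖y - x‖ ^ 2) t := by
    intro t
    have : HasDerivAt (fun t : ℝ => t ^ 2) (2 * t) t := by
      simpa using hasDerivAt_pow 2 t
    simpa using ((this.const_mul (L / 2)).mul_const (‖y - x‖ ^ 2)).congr_deriv (by ring)
  have key : ‖φ 1‖ ≤ B 1 := by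
    refine image_norm_le_of_norm_deriv_right_le_deriv_boundary
      (f := φ) (f' := fun t => ⟪gradient f (c t), y - x⟫ - ⟪gradient f x, y - x⟫)
      (a := 0) (b := 1)
      (fun t _ => (hφ t).continuousAt.continuousWithinAt)
      (fun t _ => (hφ t).hasDerivWithinAt)
      (by simp [hφdef, hB, hc])
      (fun t => hB' t)
      ?_ (by norm_num)
    intro t ht
    have h1 : ⟪gradient f (c t), y - x⟫ - ⟪gradient f x, y - x⟫
        = ⟪gradient f (c t) - gradient f x, y - x⟫ := by
      rw [inner_sub_left]
    simp only [Real.norm_eq_abs, h1]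
    calc |⟪gradient f (c t) - gradient f x, y - x⟫|
        ≤ ‖gradient f (c t) - gradient f x‖ * ‖y - x‖ := abs_real_inner_le_norm _ _
      _ ≤ (L * ‖c t - x‖) * ‖y - x‖ := by
          gcongr; exact hlip _ _
      _ = L * t * ‖y - x‖ ^ 2 := by
          have : ‖c t - x‖ = t * ‖y - x‖ := by
            simp [hc, norm_smul, abs_of_nonneg ht.1]
          rw [this]; ring
  have : φ 1 ≤ B 1 := (le_abs_self _).trans (by rwa [Real.norm_eq_abs] at key)
  simp only [hφdef, hB, hc, one_smul, one_pow] at this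
  simp only [add_sub_cancel] at this
  linarith

lemma prox_ineq {F : Type*} [NormedAddCommGroup F] [InnerProductSpace ℝ F] [CompleteSpace F]
    (h : F → ℝ) (hconv : ConvexOn ℝ Set.univ h) (η : ℝ) (hη : 0 < η)
    (y xplus x : F)
    (hmin : ∀ u, h xplus + (1 / (2 * η)) * ‖xplus - y‖ ^ 2 ≤
      h u + (1 / (2 * η)) * ‖u - y‖ ^ 2) :
    h xplus + (1 / η) * ⟪y - xplus, x - xplus⟫ ≤ h x := by
  have key : ∀ t : ℝ, 0 < t → t ≤ 1 →
      (1 / η) * ⟪y - xplus, x - xplus⟫ ≤ h x - h xplus + t * ((1 / (2 * η)) * ‖x - xplus‖ ^ 2) := by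
    intro t ht0 ht1
    have hmem := hmin (xplus + t • (x - xplus))
    have hcvx : h (xplus + t • (x - xplus)) ≤ (1 - t) * h xplus + t * h x := by
      have h0 := hconv.2 (Set.mem_univ xplus) (Set.mem_univ x)
        (by linarith : (0:ℝ) ≤ 1 - t) (le_of_lt ht0) (by ring)
      have harg : (1 - t) • xplus + t • x = xplus + t • (x - xplus) := by
        rw [sub_smul, smul_sub, one_smul]; abel
      rw [harg, smul_eq_mul, smul_eq_mul] at h0
      exact h0
    have hexp : ‖xplus + t • (x - xplus) - y‖ ^ 2
        = ‖xplus - y‖ ^ 2 + 2 * t * ⟪xplus - y, x - xplus⟫ + t ^ 2 * ‖x - xplus‖ ^ 2 := by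
      have : xplus + t • (x - xplus) - y = (xplus - y) + t • (x - xplus) := by abel
      rw [this, norm_add_sq_real, real_inner_smul_right, norm_smul]
      rw [Real.norm_eq_abs, mul_pow, sq_abs]
      ring
    rw [hexp] at hmem
    have h2η : 0 < 2 * η := by linarith
    have hiyx : ⟪y - xplus, x - xplus⟫ = -⟪xplus - y, x - xplus⟫ := by
      rw [← inner_neg_left]; congr 1; abel
    rw [hiyx]
    have := hmem
    -- h xplus + c * A ≤ (1-t) h xplus + t h x + c * (A + 2t I + t² N)
    have hineq : h xplus ≤ (1 - t) * h xplus + t * h x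
        + (1 / (2 * η)) * (2 * t * ⟪xplus - y, x - xplus⟫ + t ^ 2 * ‖x - xplus‖ ^ 2) := by
      nlinarith [hmem, hcvx]
    have hdiv : 0 ≤ t * (h x - h xplus)
        + (1 / (2 * η)) * (2 * t * ⟪xplus - y, x - xplus⟫ + t ^ 2 * ‖x - xplus‖ ^ 2) := by
      nlinarith [hineq]
    have : 0 ≤ (h x - h xplus)
        + (1 / (2 * η)) * (2 * ⟪xplus - y, x - xplus⟫ + t * ‖x - xplus‖ ^ 2) := by
      have := mul_le_mul_of_nonneg_left (le_refl t) (le_of_lt ht0)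
      nlinarith [hdiv, ht0]
    have hη' : (1 / η) = 2 * (1 / (2 * η)) := by field_simp
    have hexp2 : (1 / (2 * η)) * (2 * ⟪xplus - y, x - xplus⟫ + t * ‖x - xplus‖ ^ 2)
        = 2 * ((1 / (2 * η)) * ⟪xplus - y, x - xplus⟫)
          + t * ((1 / (2 * η)) * ‖x - xplus‖ ^ 2) := by ring
    rw [hexp2] at this
    rw [hη']
    linarith
  by_contra hcon
  push_neg at hcon
  set A := h xplus + (1 / η) * ⟪y - xplus, x - xplus⟫ - h x with hA
  have hApos : 0 < A := by rw [hA]; linarith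
  set C := (1 / (2 * η)) * ‖x - xplus‖ ^ 2 with hC
  have hC0 : 0 ≤ C := by positivity
  rcases eq_or_lt_of_le hC0 with hC0' | hCpos
  · have hk := key 1 one_pos le_rfl
    rw [← hC0'] at hk
    rw [hA] at hApos
    linarith
  · set t := min 1 (A / (2 * C)) with htdef
    have ht0 : 0 < t := lt_min one_pos (by positivity)
    have ht1 : t ≤ 1 := min_le_left _ _
    have := key t ht0 ht1
    have htC : t * C ≤ A / 2 := by
      calc t * C ≤ (A / (2 * C)) * C := by
            apply mul_le_mul_of_nonneg_right (min_le_right _ _) hC0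
        _ = A / 2 := by field_simp
    rw [hA] at hApos
    linarith

theorem prox_spiderboost_descent {d : ℕ} (f h : EuclideanSpace ℝ (Fin d) → ℝ) (L : ℝ)
    (hL : 0 ≤ L) (hdiff : Differentiable ℝ f)
    (hlip : ∀ x y, ‖gradient f x - gradient f y‖ ≤ L * ‖x - y‖)
    (hconv : ConvexOn ℝ Set.univ h)
    (η : ℝ) (hη : 0 < η) (x v xplus : EuclideanSpace ℝ (Fin d))
    (hmin : ∀ u, h xplus + (1 / (2 * η)) * ‖xplus - (x - η • v)‖ ^ 2 ≤
      h u + (1 / (2 * η)) * ‖u - (x - η • v)‖ ^ 2)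
    (g x' : EuclideanSpace ℝ (Fin d))
    (hg : g = (1 / η) • (x - xplus)) (hx' : x' = x - η • g) :
    f x' + h x' ≤ (f x + h x) + η / 2 * ‖gradient f x - v‖ ^ 2 -
      (η - L * η ^ 2 / 2 - η / 2) * ‖g‖ ^ 2 := by
  have hxg : x - xplus = η • g := by
    rw [hg, smul_smul]
    field_simp
    rw [one_smul]
  have hx'eq : x' = xplus := by
    rw [hx', ← hxg]; abel
  have hd := descent_lemma f L hL hdiff hlip x xplus
  have hp := prox_ineq h hconv η hη (x - η • v) xplus x hmin
  -- rewrite inner products in terms of g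
  have e1 : (xplus - x : EuclideanSpace ℝ (Fin d)) = -(η • g) := by
    rw [← hxg]; abel
  have e2 : ((x - η • v) - xplus : EuclideanSpace ℝ (Fin d)) = η • g - η • v := by
    rw [← hxg]; abel
  set G := gradient f x with hG
  have hd' : f xplus ≤ f x + (- (η * ⟪G, g⟫)) + L / 2 * (η ^ 2 * ‖g‖ ^ 2) := by
    have h1 : ⟪G, xplus - x⟫ = -(η * ⟪G, g⟫) := by
      rw [e1, inner_neg_right, real_inner_smul_right]
    have h2 : ‖xplus - x‖ ^ 2 = η ^ 2 * ‖g‖ ^ 2 := by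
      rw [e1, norm_neg, norm_smul, Real.norm_eq_abs, mul_pow, sq_abs]
    rw [h1, h2] at hd; exact hd
  have hp' : h xplus + (η * ⟪g, g⟫ - η * ⟪v, g⟫) ≤ h x := by
    have h1 : (1 / η) * ⟪(x - η • v) - xplus, x - xplus⟫ = η * ⟪g, g⟫ - η * ⟪v, g⟫ := by
      rw [e2, hxg, inner_sub_left, real_inner_smul_left, real_inner_smul_left,
        real_inner_smul_right, real_inner_smul_right]
      field_simp
    rw [h1] at hp; exact hp
  have hgg : ⟪g, g⟫ = ‖g‖ ^ 2 := real_inner_self_eq_norm_sq g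
  -- Cauchy-Schwarz + Young
  have hcs : ⟪v - G, g⟫ ≤ ‖G - v‖ ^ 2 / 2 + ‖g‖ ^ 2 / 2 := by
    have h1 : ⟪v - G, g⟫ ≤ ‖v - G‖ * ‖g‖ := real_inner_le_norm _ _
    have h2 : ‖v - G‖ = ‖G - v‖ := by rw [← norm_neg]; congr 1; abel
    rw [h2] at h1
    nlinarith [sq_nonneg (‖G - v‖ - ‖g‖)]
  have hinner : ⟪v, g⟫ - ⟪G, g⟫ = ⟪v - G, g⟫ := (inner_sub_left v G g).symm
  rw [hx'eq]
  nlinarith [hd', hp', hcs, hη.le, hgg, hinner]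
end
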